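/- Suppose H1 and H2 are vertex-disjoint 3-regular bridgeless graphs, e1 = u a is an edge of H1 and e2 = v b is an edge of H2. Then the graph H obtained from the disjoint union H1 ⊔ H2 by deleting e1 and e2 and adding the edges u v and a b is 3-regular and bridgeless. -/

import Mathlib

open SimpleGraph

/-- A graph is bridgeless if no edge is a bridge. -/
def Bridgeless {V : Type} (G : SimpleGraph V) : Prop := ∀ e : Sym2 V, ¬ G.IsBridge e

/-- A graph is cubic (3-regular) if every vertex has degree exactly 3. -/
def CubicGraph {V : Type} (G : SimpleGraph V) : Prop := ∀ v : V, Nat.card (G.neighborSet v) = 3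

/-- `G` is (isomorphic to) a subgraph of `H`. -/
def IsSubgraphOf {V W : Type} (G : SimpleGraph V) (H : SimpleGraph W) : Prop :=
  ∃ f : G →g H, Function.Injective f

/-- The graph obtained from the disjoint union of `H1` and `H2` by deleting the
edges `u a` and `v b` and adding the edges `u v` and `a b`. -/
def swapGraph {V1 V2 : Type} (H1 : SimpleGraph V1) (H2 : SimpleGraph V2)
    (u a : V1) (v b : V2) : SimpleGraph (V1 ⊕ V2) :=
  SimpleGraph.fromEdgeSet
    (((Sym2.map (Sum.inl : V1 → V1 ⊕ V2) '' H1.edgeSet) \ {s(Sum.inl u, Sum.inl a)}) ∪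
     ((Sym2.map (Sum.inr : V2 → V1 ⊕ V2) '' H2.edgeSet) \ {s(Sum.inr v, Sum.inr b)}) ∪
     {s((Sum.inl u : V1 ⊕ V2), Sum.inr v), s((Sum.inl a : V1 ⊕ V2), Sum.inr b)})

open Sum

variable {V1 V2 : Type} {H1 : SimpleGraph V1} {H2 : SimpleGraph V2} {u a : V1} {v b : V2}

lemma map_inl_eq_ll {e : Sym2 V1} {p q : V1} :
    Sym2.map (inl : V1 → V1 ⊕ V2) e = s(inl p, inl q) ↔ e = s(p, q) := by
  constructor
  · intro h; exact Sym2.map.injective Sum.inl_injective (by simpa using h)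
  · rintro rfl; simp

lemma map_inr_eq_rr {e : Sym2 V2} {p q : V2} :
    Sym2.map (inr : V2 → V1 ⊕ V2) e = s(inr p, inr q) ↔ e = s(p, q) := by
  constructor
  · intro h; exact Sym2.map.injective Sum.inr_injective (by simpa using h)
  · rintro rfl; simp

lemma map_inr_ne_ll {e : Sym2 V2} {p q : V1} :
    Sym2.map (inr : V2 → V1 ⊕ V2) e ≠ s(inl p, inl q) := by
  induction e using Sym2.ind with
  | _ c d => simp [Sym2.eq_iff]

lemma map_inl_ne_rr {e : Sym2 V1} {p q : V2} :
    Sym2.map (inl : V1 → V1 ⊕ V2) e ≠ s(inr p, inr q) := by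
  induction e using Sym2.ind with
  | _ c d => simp [Sym2.eq_iff]

lemma map_inl_ne_lr {e : Sym2 V1} {p : V1} {q : V2} :
    Sym2.map (inl : V1 → V1 ⊕ V2) e ≠ s(inl p, inr q) := by
  induction e using Sym2.ind with
  | _ c d => simp [Sym2.eq_iff]

lemma map_inr_ne_lr {e : Sym2 V2} {p : V1} {q : V2} :
    Sym2.map (inr : V2 → V1 ⊕ V2) e ≠ s(inl p, inr q) := by
  induction e using Sym2.ind with
  | _ c d => simp [Sym2.eq_iff]

lemma sym2_ll {p q u a : V1} :
    (s(inl p, inl q) : Sym2 (V1 ⊕ V2)) = s(inl u, inl a) ↔ s(p,q) = s(u,a) := by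
  simp [Sym2.eq_iff]

lemma sym2_rr {p q v b : V2} :
    (s(inr p, inr q) : Sym2 (V1 ⊕ V2)) = s(inr v, inr b) ↔ s(p,q) = s(v,b) := by
  simp [Sym2.eq_iff]

lemma adj_ll {p q : V1} : (swapGraph H1 H2 u a v b).Adj (inl p) (inl q) ↔
    H1.Adj p q ∧ s(p,q) ≠ s(u,a) := by
  simp only [swapGraph, fromEdgeSet_adj, Set.mem_union, Set.mem_diff, Set.mem_image,
    Set.mem_insert_iff, Set.mem_singleton_iff]
  constructor
  · rintro ⟨((⟨⟨e, he, hme⟩, hd⟩ | ⟨⟨e, he, hme⟩, hd⟩) | (h | h)), hne⟩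
    · rw [map_inl_eq_ll] at hme; subst hme
      exact ⟨he, fun hc => hd (sym2_ll.mpr hc)⟩
    · exact absurd hme map_inr_ne_ll
    · simp [Sym2.eq_iff] at h
    · simp [Sym2.eq_iff] at h
  · rintro ⟨h, hne⟩
    exact ⟨Or.inl (Or.inl ⟨⟨s(p,q), h, by simp⟩, fun hc => hne (sym2_ll.mp hc)⟩),
      by simpa using h.ne⟩

lemma adj_rr {p q : V2} : (swapGraph H1 H2 u a v b).Adj (inr p) (inr q) ↔
    H2.Adj p q ∧ s(p,q) ≠ s(v,b) := by
  simp only [swapGraph, fromEdgeSet_adj, Set.mem_union, Set.mem_diff, Set.mem_image,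
    Set.mem_insert_iff, Set.mem_singleton_iff]
  constructor
  · rintro ⟨((⟨⟨e, he, hme⟩, hd⟩ | ⟨⟨e, he, hme⟩, hd⟩) | (h | h)), hne⟩
    · exact absurd hme map_inl_ne_rr
    · rw [map_inr_eq_rr] at hme; subst hme
      exact ⟨he, fun hc => hd (sym2_rr.mpr hc)⟩
    · simp [Sym2.eq_iff] at h
    · simp [Sym2.eq_iff] at h
  · rintro ⟨h, hne⟩
    exact ⟨Or.inl (Or.inr ⟨⟨s(p,q), h, by simp⟩, fun hc => hne (sym2_rr.mp hc)⟩),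
      by simpa using h.ne⟩

lemma adj_lr {p : V1} {q : V2} : (swapGraph H1 H2 u a v b).Adj (inl p) (inr q) ↔
    (p = u ∧ q = v) ∨ (p = a ∧ q = b) := by
  simp only [swapGraph, fromEdgeSet_adj, Set.mem_union, Set.mem_diff, Set.mem_image,
    Set.mem_insert_iff, Set.mem_singleton_iff]
  constructor
  · rintro ⟨((⟨⟨e, he, hme⟩, hd⟩ | ⟨⟨e, he, hme⟩, hd⟩) | (h | h)), hne⟩
    · exact absurd hme map_inl_ne_lr
    · exact absurd hme map_inr_ne_lr
    · rcases Sym2.eq_iff.mp h with ⟨h1, h2⟩ | ⟨h1, h2⟩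
      · exact Or.inl ⟨inl_injective h1, inr_injective h2⟩
      · exact absurd h1 (by simp)
    · rcases Sym2.eq_iff.mp h with ⟨h1, h2⟩ | ⟨h1, h2⟩
      · exact Or.inr ⟨inl_injective h1, inr_injective h2⟩
      · exact absurd h1 (by simp)
  · rintro (⟨rfl, rfl⟩ | ⟨rfl, rfl⟩)
    · exact ⟨Or.inr (Or.inl rfl), by simp⟩
    · exact ⟨Or.inr (Or.inr rfl), by simp⟩

lemma adj_rl {p : V2} {q : V1} : (swapGraph H1 H2 u a v b).Adj (inr p) (inl q) ↔
    (q = u ∧ p = v) ∨ (q = a ∧ p = b) := by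
  rw [adj_comm]; exact adj_lr

-- neighbor sets
lemma ns_mid {w : V1} (hu : w ≠ u) (ha : w ≠ a) :
    (swapGraph H1 H2 u a v b).neighborSet (inl w) = inl '' H1.neighborSet w := by
  ext x
  cases x with
  | inl q => simp [mem_neighborSet, adj_ll, Sym2.eq_iff, hu, ha]
  | inr q => simp [mem_neighborSet, adj_lr, hu, ha]

lemma ns_u (hne : u ≠ a) :
    (swapGraph H1 H2 u a v b).neighborSet (inl u) =
      insert (inr v) (inl '' (H1.neighborSet u \ {a})) := by
  ext x
  cases x with
  | inl q => simp [mem_neighborSet, adj_ll, Sym2.eq_iff, hne, and_comm]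
  | inr q => simp [mem_neighborSet, adj_lr, hne]

lemma ns_a (hne : u ≠ a) :
    (swapGraph H1 H2 u a v b).neighborSet (inl a) =
      insert (inr b) (inl '' (H1.neighborSet a \ {u})) := by
  ext x
  cases x with
  | inl q => simp [mem_neighborSet, adj_ll, Sym2.eq_iff, hne.symm, and_comm]
  | inr q => simp [mem_neighborSet, adj_lr, hne.symm]

lemma ns_mid' {w : V2} (hv : w ≠ v) (hb : w ≠ b) :
    (swapGraph H1 H2 u a v b).neighborSet (inr w) = inr '' H2.neighborSet w := by
  ext x
  cases x with
  | inl q => simp [mem_neighborSet, adj_rl, hv, hb]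
  | inr q =>
      rw [mem_neighborSet, adj_comm, adj_rr]
      simp [Sym2.eq_iff, hv, hb, adj_comm]

lemma ns_v (hne : v ≠ b) :
    (swapGraph H1 H2 u a v b).neighborSet (inr v) =
      insert (inl u) (inr '' (H2.neighborSet v \ {b})) := by
  ext x
  cases x with
  | inl q =>
      rw [mem_neighborSet, adj_comm, adj_lr]
      simp [hne]
  | inr q =>
      rw [mem_neighborSet, adj_comm, adj_rr]
      simp [Sym2.eq_iff, hne, adj_comm, and_comm]

lemma ns_b (hne : v ≠ b) :
    (swapGraph H1 H2 u a v b).neighborSet (inr b) =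
      insert (inl a) (inr '' (H2.neighborSet b \ {v})) := by
  ext x
  cases x with
  | inl q =>
      rw [mem_neighborSet, adj_comm, adj_lr]
      simp [hne.symm]
  | inr q =>
      rw [mem_neighborSet, adj_comm, adj_rr]
      simp [Sym2.eq_iff, hne.symm, adj_comm, and_comm]

-- ncard helpers
lemma ncard_end {V U : Type} [Fintype V] {K : SimpleGraph V}
    {w x : V} (h : Nat.card (K.neighborSet w) = 3) (hx : K.Adj w x)
    (f : V → U) (hf : Function.Injective f) (z : U) (hz : z ∉ Set.range f) :
    (insert z (f '' (K.neighborSet w \ {x}))).ncard = 3 := by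
  have hfin : (K.neighborSet w).Finite := Set.toFinite _
  have h3 : (K.neighborSet w).ncard = 3 := by
    rwa [← Nat.card_coe_set_eq]
  have h2 : (K.neighborSet w \ {x}).ncard = 2 := by
    have hmem : x ∈ K.neighborSet w := hx
    rw [Set.ncard_diff_singleton_of_mem hmem, h3]
  rw [Set.ncard_insert_of_notMem (fun hc => hz (by
      obtain ⟨y, _, hy⟩ := hc; exact ⟨y, hy⟩)) (Set.Finite.image _ hfin.diff),
    Set.ncard_image_of_injective _ hf, h2]

lemma swap_cubic [Fintype V1] [Fintype V2]
    (hc1 : CubicGraph H1) (hc2 : CubicGraph H2) (he1 : H1.Adj u a) (he2 : H2.Adj v b) :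
    CubicGraph (swapGraph H1 H2 u a v b) := by
  intro x
  rw [Nat.card_coe_set_eq]
  cases x with
  | inl w =>
    by_cases hu : w = u
    · subst hu
      rw [ns_u he1.ne]
      exact ncard_end (hc1 w) he1 inl inl_injective (inr v) (by simp)
    · by_cases ha : w = a
      · subst ha
        rw [ns_a he1.ne]
        exact ncard_end (hc1 w) he1.symm inl inl_injective (inr b) (by simp)
      · rw [ns_mid hu ha, Set.ncard_image_of_injective _ inl_injective,
          ← Nat.card_coe_set_eq]
        exact hc1 w
  | inr w =>
    by_cases hv : w = v
    · subst hv
      rw [ns_v he2.ne]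
      exact ncard_end (hc2 w) he2 inr inr_injective (inl u) (by simp)
    · by_cases hb : w = b
      · subst hb
        rw [ns_b he2.ne]
        exact ncard_end (hc2 w) he2.symm inr inr_injective (inl a) (by simp)
      · rw [ns_mid' hv hb, Set.ncard_image_of_injective _ inr_injective,
          ← Nat.card_coe_set_eq]
        exact hc2 w

-- reachability machinery
lemma reach_map {α β : Type} {K : SimpleGraph α} {G : SimpleGraph β} (f : α → β)
    (h : ∀ x y, K.Adj x y → G.Reachable (f x) (f y)) {x y : α} (hr : K.Reachable x y) :
    G.Reachable (f x) (f y) := by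
  obtain ⟨w⟩ := hr
  induction w with
  | nil => exact Reachable.refl _
  | cons hadj _ ih => exact (h _ _ hadj).trans ih

lemma del_adj {W : Type} {G : SimpleGraph W} {e : Sym2 W} {x y : W} :
    (G \ fromEdgeSet {e}).Adj x y ↔ G.Adj x y ∧ s(x,y) ≠ e := by
  simp only [sdiff_adj, fromEdgeSet_adj, Set.mem_singleton_iff, not_and]
  constructor
  · rintro ⟨h1, h2⟩; exact ⟨h1, fun hc => (h2 hc) h1.ne⟩
  · rintro ⟨h1, h2⟩; exact ⟨h1, fun hc => absurd hc h2⟩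

lemma reach_of_not_bridge {W : Type} {G : SimpleGraph W} (hb : Bridgeless G) {x y : W}
    (h : G.Adj x y) : (G \ fromEdgeSet {s(x,y)}).Reachable x y := by
  by_contra hr
  exact hb s(x,y) (isBridge_iff.mpr hr)

-- reach (inr v) (inr b) in swapGraph minus any edge e that is not of inr-inr form
lemma reach_vb {e : Sym2 (V1 ⊕ V2)} (hb2 : Bridgeless H2) (he2 : H2.Adj v b)
    (hne : ∀ x y : V2, s(inr x, inr y) ≠ e) :
    ((swapGraph H1 H2 u a v b) \ fromEdgeSet {e}).Reachable (inr v) (inr b) := by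
  refine reach_map inr (fun x y hxy => ?_) (reach_of_not_bridge hb2 he2)
  rw [del_adj] at hxy
  exact Adj.reachable (del_adj.mpr ⟨adj_rr.mpr hxy, hne x y⟩)

lemma reach_ua {e : Sym2 (V1 ⊕ V2)} (hb1 : Bridgeless H1) (he1 : H1.Adj u a)
    (hne : ∀ x y : V1, s(inl x, inl y) ≠ e) :
    ((swapGraph H1 H2 u a v b) \ fromEdgeSet {e}).Reachable (inl u) (inl a) := by
  refine reach_map inl (fun x y hxy => ?_) (reach_of_not_bridge hb1 he1)
  rw [del_adj] at hxy
  exact Adj.reachable (del_adj.mpr ⟨adj_ll.mpr hxy, hne x y⟩)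

lemma swap_reach (hb1 : Bridgeless H1) (hb2 : Bridgeless H2)
    (he1 : H1.Adj u a) (he2 : H2.Adj v b) :
    ∀ x y : V1 ⊕ V2, (swapGraph H1 H2 u a v b).Adj x y →
      ((swapGraph H1 H2 u a v b) \ fromEdgeSet {s(x, y)}).Reachable x y := by
  set G := swapGraph H1 H2 u a v b with hG
  have key_uv : (G \ fromEdgeSet {s(inl u, inr v)}).Reachable (inl u) (inr v) := by
    have r1 : (G \ fromEdgeSet {s(inl u, inr v)}).Reachable (inl u) (inl a) := by
      refine reach_map inl (fun x y hxy => ?_) (reach_of_not_bridge hb1 he1)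
      rw [del_adj] at hxy
      exact Adj.reachable (del_adj.mpr ⟨adj_ll.mpr hxy, by simp [Sym2.eq_iff]⟩)
    have r2 : (G \ fromEdgeSet {s(inl u, inr v)}).Adj (inl a) (inr b) := by
      refine del_adj.mpr ⟨adj_lr.mpr (Or.inr ⟨rfl, rfl⟩), fun hc => ?_⟩
      rcases Sym2.eq_iff.mp hc with ⟨h1, h2⟩ | ⟨h1, h2⟩
      · exact he1.ne (inl_injective h1).symm
      · simp at h1
    have r3 : (G \ fromEdgeSet {s(inl u, inr v)}).Reachable (inr b) (inr v) :=
      (reach_vb hb2 he2 (by simp [Sym2.eq_iff])).symm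
    exact r1.trans (r2.reachable.trans r3)
  have key_ab : (G \ fromEdgeSet {s(inl a, inr b)}).Reachable (inl a) (inr b) := by
    have r1 : (G \ fromEdgeSet {s(inl a, inr b)}).Reachable (inl a) (inl u) := by
      refine Reachable.symm ?_
      refine reach_map inl (fun x y hxy => ?_) (reach_of_not_bridge hb1 he1)
      rw [del_adj] at hxy
      exact Adj.reachable (del_adj.mpr ⟨adj_ll.mpr hxy, by simp [Sym2.eq_iff]⟩)
    have r2 : (G \ fromEdgeSet {s(inl a, inr b)}).Adj (inl u) (inr v) := by
      refine del_adj.mpr ⟨adj_lr.mpr (Or.inl ⟨rfl, rfl⟩), fun hc => ?_⟩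
      rcases Sym2.eq_iff.mp hc with ⟨h1, h2⟩ | ⟨h1, h2⟩
      · exact he1.ne (inl_injective h1)
      · simp at h1
    have r3 : (G \ fromEdgeSet {s(inl a, inr b)}).Reachable (inr v) (inr b) :=
      reach_vb hb2 he2 (by simp [Sym2.eq_iff])
    exact r1.trans (r2.reachable.trans r3)
  intro x y hxy
  match x, y with
  | inl p, inl q =>
    rw [hG, adj_ll] at hxy
    obtain ⟨hpq, _⟩ := hxy
    refine reach_map inl (fun c d hcd => ?_) (reach_of_not_bridge hb1 hpq)
    rw [del_adj] at hcd
    obtain ⟨hADJ, hne⟩ := hcd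
    by_cases hua : s(c, d) = s(u, a)
    · have hreach : (G \ fromEdgeSet {s(inl p, inl q)}).Reachable (inl u) (inl a) := by
        have r1 : (G \ fromEdgeSet {s(inl p, inl q)}).Adj (inl u) (inr v) :=
          del_adj.mpr ⟨adj_lr.mpr (Or.inl ⟨rfl, rfl⟩), by simp [Sym2.eq_iff]⟩
        have r2 : (G \ fromEdgeSet {s(inl p, inl q)}).Reachable (inr v) (inr b) :=
          reach_vb hb2 he2 (by simp [Sym2.eq_iff])
        have r3 : (G \ fromEdgeSet {s(inl p, inl q)}).Adj (inr b) (inl a) :=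
          del_adj.mpr ⟨adj_rl.mpr (Or.inr ⟨rfl, rfl⟩), by simp [Sym2.eq_iff]⟩
        exact (r1.reachable.trans r2).trans r3.reachable
      rcases Sym2.eq_iff.mp hua with ⟨rfl, rfl⟩ | ⟨rfl, rfl⟩
      · exact hreach
      · exact hreach.symm
    · exact Adj.reachable (del_adj.mpr ⟨adj_ll.mpr ⟨hADJ, hua⟩,
        fun hc => hne (sym2_ll.mp hc)⟩)
  | inr p, inr q =>
    rw [hG, adj_rr] at hxy
    obtain ⟨hpq, _⟩ := hxy
    refine reach_map inr (fun c d hcd => ?_) (reach_of_not_bridge hb2 hpq)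
    rw [del_adj] at hcd
    obtain ⟨hADJ, hne⟩ := hcd
    by_cases hvb : s(c, d) = s(v, b)
    · have hreach : (G \ fromEdgeSet {s(inr p, inr q)}).Reachable (inr v) (inr b) := by
        have r1 : (G \ fromEdgeSet {s(inr p, inr q)}).Adj (inr v) (inl u) :=
          del_adj.mpr ⟨adj_rl.mpr (Or.inl ⟨rfl, rfl⟩), by simp [Sym2.eq_iff]⟩
        have r2 : (G \ fromEdgeSet {s(inr p, inr q)}).Reachable (inl u) (inl a) :=
          reach_ua hb1 he1 (by simp [Sym2.eq_iff])
        have r3 : (G \ fromEdgeSet {s(inr p, inr q)}).Adj (inl a) (inr b) :=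
          del_adj.mpr ⟨adj_lr.mpr (Or.inr ⟨rfl, rfl⟩), by simp [Sym2.eq_iff]⟩
        exact (r1.reachable.trans r2).trans r3.reachable
      rcases Sym2.eq_iff.mp hvb with ⟨rfl, rfl⟩ | ⟨rfl, rfl⟩
      · exact hreach
      · exact hreach.symm
    · exact Adj.reachable (del_adj.mpr ⟨adj_rr.mpr ⟨hADJ, hvb⟩,
        fun hc => hne (sym2_rr.mp hc)⟩)
  | inl p, inr q =>
    rcases adj_lr.mp hxy with ⟨rfl, rfl⟩ | ⟨rfl, rfl⟩
    · exact key_uv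
    · exact key_ab
  | inr p, inl q =>
    rcases adj_rl.mp hxy with ⟨rfl, rfl⟩ | ⟨rfl, rfl⟩
    · rw [Sym2.eq_swap]; exact key_uv.symm
    · rw [Sym2.eq_swap]; exact key_ab.symm

lemma swap_conn (hb1 : Bridgeless H1) (hb2 : Bridgeless H2)
    (he1 : H1.Adj u a) (he2 : H2.Adj v b) :
    ∀ x y : V1 ⊕ V2, (swapGraph H1 H2 u a v b).Reachable x y := by
  set G := swapGraph H1 H2 u a v b with hG
  have hl : ∀ p q : V1, G.Reachable (inl p) (inl q) := by
    intro p q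
    have h0 : (H1 \ fromEdgeSet {s(p,q)}).Reachable p q := by
      by_contra hr
      exact hb1 s(p,q) (isBridge_iff.mpr hr)
    refine reach_map inl (fun c d hcd => ?_) (h0.mono sdiff_le)
    by_cases hua : s(c, d) = s(u, a)
    · have hr : G.Reachable (inl u) (inl a) :=
        (reach_ua (e := s(inl u, inr v)) hb1 he1 (by simp [Sym2.eq_iff])).mono sdiff_le
      rcases Sym2.eq_iff.mp hua with ⟨rfl, rfl⟩ | ⟨rfl, rfl⟩
      · exact hr
      · exact hr.symm
    · exact Adj.reachable (adj_ll.mpr ⟨hcd, hua⟩)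
  have hr : ∀ p q : V2, G.Reachable (inr p) (inr q) := by
    intro p q
    have h0 : (H2 \ fromEdgeSet {s(p,q)}).Reachable p q := by
      by_contra hr
      exact hb2 s(p,q) (isBridge_iff.mpr hr)
    refine reach_map inr (fun c d hcd => ?_) (h0.mono sdiff_le)
    by_cases hvb : s(c, d) = s(v, b)
    · have hr : G.Reachable (inr v) (inr b) :=
        (reach_vb (e := s(inl u, inr v)) hb2 he2 (by simp [Sym2.eq_iff])).mono sdiff_le
      rcases Sym2.eq_iff.mp hvb with ⟨rfl, rfl⟩ | ⟨rfl, rfl⟩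
      · exact hr
      · exact hr.symm
    · exact Adj.reachable (adj_rr.mpr ⟨hcd, hvb⟩)
  have hlr : ∀ (p : V1) (q : V2), G.Reachable (inl p) (inr q) := fun p q =>
    (hl p u).trans ((adj_lr.mpr (Or.inl ⟨rfl, rfl⟩)).reachable.trans (hr v q))
  intro x y
  cases x <;> cases y
  · exact hl _ _
  · exact hlr _ _
  · exact (hlr _ _).symm
  · exact hr _ _

lemma swap_bridgeless (hb1 : Bridgeless H1) (hb2 : Bridgeless H2)
    (he1 : H1.Adj u a) (he2 : H2.Adj v b) :
    Bridgeless (swapGraph H1 H2 u a v b) := by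
  intro e
  induction e using Sym2.ind with
  | _ x y =>
    rw [isBridge_iff]
    intro hnr
    by_cases hadj : (swapGraph H1 H2 u a v b).Adj x y
    · exact hnr (swap_reach hb1 hb2 he1 he2 x y hadj)
    · refine hnr ((swap_conn hb1 hb2 he1 he2 x y).mono ?_)
      intro c d hcd
      refine del_adj.mpr ⟨hcd, fun hc => hadj ?_⟩
      rcases Sym2.eq_iff.mp hc with ⟨rfl, rfl⟩ | ⟨rfl, rfl⟩
      · exact hcd
      · exact hcd.symm



/-- Deleting an edge from each of two disjoint 3-regular bridgeless graphs and
reconnecting crosswise yields a 3-regular bridgeless graph. -/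
theorem stmt15 {V1 V2 : Type} [Fintype V1] [Fintype V2]
    (H1 : SimpleGraph V1) (H2 : SimpleGraph V2)
    (hc1 : CubicGraph H1) (hb1 : Bridgeless H1)
    (hc2 : CubicGraph H2) (hb2 : Bridgeless H2)
    (u a : V1) (v b : V2) (he1 : H1.Adj u a) (he2 : H2.Adj v b) :
    CubicGraph (swapGraph H1 H2 u a v b) ∧ Bridgeless (swapGraph H1 H2 u a v b) := by
  exact ⟨swap_cubic hc1 hc2 he1 he2, swap_bridgeless hb1 hb2 he1 he2⟩
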